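/- If the approximate misfit Φ^a and the enhanced noise misfit Φ^e both belong to L¹_{μ_θ}, then ‖Φ^a − Φ^e‖_{L¹_{μ_θ}} ≤ 2^{−1/2} · |O m_ε|_{Σ_η^{−1}} · ( ‖Φ^a‖_{L¹_{μ_θ}}^{1/2} + C_e · ‖Φ^e‖_{L¹_{μ_θ}}^{1/2} ) + 2^{−1} · ‖ |y − O∘M − O m_ε|²_{Σ_η^{−1} − (Σ_η+S)^{−1}} ‖_{L¹_{μ_θ}}. -/

import Mathlib

/-!
Write `d = y - O (M θ)`, `m = O m_ε` and `e = d - m`. In the `Σ_η⁻¹` inner product,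
`|d|² - |e|² = ⟨m, d⟩ + ⟨m, e⟩`, so by Cauchy–Schwarz `Φ^a - Φ^e` is bounded pointwise by
`|m| (|d| + |e|) / 2` plus half the difference of the two weights evaluated at `e`.
Moreover `|e|_{Σ_η⁻¹} ≤ C_e |e|_{(Σ_η+S)⁻¹}`: writing `e = (Σ_η+S)^{1/2} w` gives
`|w| = |e|_{(Σ_η+S)⁻¹}` and `|e|_{Σ_η⁻¹} = |Σ_η^{-1/2} (Σ_η+S)^{1/2} w|`. Integrating, Jensen's
inequality for the concave square root turns `∫ √Φ` into `√(∫ Φ)`.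
-/

open MeasureTheory Real Matrix

/-- `Matrix.PosSemidef.sqrt` as it was defined in Mathlib (Dec 2024); removed since. -/
noncomputable def Matrix.PosSemidef.sqrt {n 𝕜 : Type*} [Fintype n] [RCLike 𝕜] [PartialOrder 𝕜]
    [DecidableEq n]     {A : Matrix n n 𝕜} (hA : A.PosSemidef) : Matrix n n 𝕜 :=
  hA.1.eigenvectorUnitary.1 * diagonal ((↑) ∘ (√·) ∘ hA.1.eigenvalues) *
    (star hA.1.eigenvectorUnitary : Matrix n n 𝕜)

noncomputable def matOpNorm {n : ℕ} (A : Matrix (Fin n) (Fin n) ℝ) : ℝ :=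
  ‖LinearMap.toContinuousLinearMap (Matrix.toEuclideanLin A)‖

lemma sqrt_abs_one_half_mul {x : ℝ} (hx : 0 ≤ x) : √|1 / 2 * x| = (√2)⁻¹ * √x := by
  rw [abs_of_nonneg (by positivity), sqrt_mul (by norm_num), one_div, sqrt_inv]

section DotProduct

variable {n : Type*} [Fintype n]

lemma dotProduct_self_nonneg (u : n → ℝ) : 0 ≤ u ⬝ᵥ u :=
  Finset.sum_nonneg fun i _ => mul_self_nonneg (u i)

lemma norm_toLp_eq_sqrt_dotProduct (u : n → ℝ) : ‖WithLp.toLp 2 u‖ = √(u ⬝ᵥ u) := by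
  rw [eq_comm, sqrt_eq_iff_eq_sq (dotProduct_self_nonneg u) (norm_nonneg _),
    ← real_inner_self_eq_norm_sq, EuclideanSpace.inner_toLp_toLp, star_trivial]

lemma abs_dotProduct_le_sqrt_mul_sqrt (u v : n → ℝ) :
    |u ⬝ᵥ v| ≤ √(u ⬝ᵥ u) * √(v ⬝ᵥ v) := by
  have h := abs_real_inner_le_norm (WithLp.toLp 2 v) (WithLp.toLp 2 u)
  rwa [EuclideanSpace.inner_toLp_toLp, star_trivial, norm_toLp_eq_sqrt_dotProduct,
    norm_toLp_eq_sqrt_dotProduct, mul_comm] at h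

end DotProduct

namespace Matrix

variable {m n : Type*} [Fintype n]

lemma dotProduct_transpose_mul_mulVec {R : Type*} [CommSemiring R] [Fintype m]
    (B : Matrix m n R) (u v : n → R) :
    u ⬝ᵥ ((Bᵀ * B) *ᵥ v) = (B *ᵥ u) ⬝ᵥ (B *ᵥ v) := by
  rw [← mulVec_mulVec, dotProduct_mulVec, vecMul_transpose]

lemma PosSemidef.dotProduct_mulVec_self_nonneg {A : Matrix n n ℝ} (hA : A.PosSemidef)
    (u : n → ℝ) : 0 ≤ u ⬝ᵥ (A *ᵥ u) := by
  simpa using hA.dotProduct_mulVec_nonneg u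

lemma dotProduct_mulVec_self_sub_dotProduct_mulVec_sub {A : Matrix n n ℝ} (hA : A.IsSymm)
    (d m : n → ℝ) :
    d ⬝ᵥ (A *ᵥ d) - (d - m) ⬝ᵥ (A *ᵥ (d - m)) = m ⬝ᵥ (A *ᵥ d) + m ⬝ᵥ (A *ᵥ (d - m)) := by
  have hsymm : (d - m) ⬝ᵥ (A *ᵥ m) = m ⬝ᵥ (A *ᵥ (d - m)) := by
    simpa only [hA.eq] using dotProduct_transpose_mulVec A (d - m) m
  simp only [mulVec_sub, dotProduct_sub, sub_dotProduct] at hsymm ⊢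
  linarith

lemma sqrt_mulVec_dotProduct_mulVec_le_matOpNorm_mul {k : ℕ} (M : Matrix (Fin k) (Fin k) ℝ)
    (v : Fin k → ℝ) :
    √((M *ᵥ v) ⬝ᵥ (M *ᵥ v)) ≤ matOpNorm M * √(v ⬝ᵥ v) := by
  have h := (LinearMap.toContinuousLinearMap (toEuclideanLin M)).le_opNorm (WithLp.toLp 2 v)
  rwa [LinearMap.coe_toContinuousLinearMap', toLpLin_toLp, toLin'_apply,
    norm_toLp_eq_sqrt_dotProduct, norm_toLp_eq_sqrt_dotProduct] at h

variable [DecidableEq n]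

open scoped MatrixOrder

lemma PosSemidef.sqrt_eq_cfcSqrt {A : Matrix n n ℝ} (hA : A.PosSemidef) :
    hA.sqrt = CFC.sqrt A := by
  rw [CFC.sqrt_eq_cfc, cfc_nnreal_eq_real _ A, hA.1.cfc_eq, IsHermitian.cfc,
    Unitary.conjStarAlgAut_apply, PosSemidef.sqrt]
  congr with x
  rw [Real.sqrt]

lemma PosSemidef.sqrt_mul_self {A : Matrix n n ℝ} (hA : A.PosSemidef) :
    hA.sqrt * hA.sqrt = A := by
  rw [hA.sqrt_eq_cfcSqrt, CFC.sqrt_mul_sqrt_self A hA.nonneg]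

lemma PosSemidef.transpose_sqrt {A : Matrix n n ℝ} (hA : A.PosSemidef) :
    hA.sqrtᵀ = hA.sqrt := by
  rw [hA.sqrt_eq_cfcSqrt, ← conjTranspose_eq_transpose_of_trivial]
  exact (CFC.sqrt_nonneg A).posSemidef.isHermitian.eq

lemma PosSemidef.dotProduct_mulVec_eq_sqrt {A : Matrix n n ℝ} (hA : A.PosSemidef)
    (u v : n → ℝ) : u ⬝ᵥ (A *ᵥ v) = (hA.sqrt *ᵥ u) ⬝ᵥ (hA.sqrt *ᵥ v) := by
  have h := dotProduct_transpose_mul_mulVec hA.sqrt u v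
  rwa [hA.transpose_sqrt, hA.sqrt_mul_self] at h

lemma PosSemidef.abs_dotProduct_mulVec_le {A : Matrix n n ℝ} (hA : A.PosSemidef)
    (u v : n → ℝ) : |u ⬝ᵥ (A *ᵥ v)| ≤ √(u ⬝ᵥ (A *ᵥ u)) * √(v ⬝ᵥ (A *ᵥ v)) := by
  simpa only [hA.dotProduct_mulVec_eq_sqrt] using abs_dotProduct_le_sqrt_mul_sqrt _ _

lemma PosDef.sqrt_dotProduct_inv_mulVec_le {k : ℕ} {Γ Λ : Matrix (Fin k) (Fin k) ℝ}
    (hΓ : Γ.PosDef) (hΛ : Λ.PosDef) (e : Fin k → ℝ) :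
    √(e ⬝ᵥ (Γ⁻¹ *ᵥ e)) ≤
      matOpNorm (hΓ.inv.posSemidef.sqrt * hΛ.posSemidef.sqrt) * √(e ⬝ᵥ (Λ⁻¹ *ᵥ e)) := by
  set B := hΛ.posSemidef.sqrt
  have hBB : B * B = Λ := hΛ.posSemidef.sqrt_mul_self
  have hB : IsUnit B.det := by
    have h := (isUnit_iff_isUnit_det Λ).mp hΛ.isUnit
    rw [← hBB, det_mul, IsUnit.mul_iff] at h
    exact h.1
  set w := B⁻¹ *ᵥ e
  have he : e = B *ᵥ w := by rw [mulVec_mulVec, mul_nonsing_inv B hB, one_mulVec]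
  have hΛw : e ⬝ᵥ (Λ⁻¹ *ᵥ e) = w ⬝ᵥ w := by
    have hBinv : B⁻¹ᵀ = B⁻¹ := by rw [transpose_nonsing_inv, hΛ.posSemidef.transpose_sqrt]
    have h := dotProduct_transpose_mul_mulVec B⁻¹ e e
    rwa [hBinv, ← mul_inv_rev, hBB] at h
  have hΓw : e ⬝ᵥ (Γ⁻¹ *ᵥ e) = ((hΓ.inv.posSemidef.sqrt * B) *ᵥ w) ⬝ᵥ
      ((hΓ.inv.posSemidef.sqrt * B) *ᵥ w) := by
    rw [hΓ.inv.posSemidef.dotProduct_mulVec_eq_sqrt, ← mulVec_mulVec, ← he]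
  rw [hΛw, hΓw]
  exact sqrt_mulVec_dotProduct_mulVec_le_matOpNorm_mul _ w

lemma abs_dotProduct_mulVec_sub_dotProduct_mulVec_sub_le {P Q : Matrix n n ℝ}
    (hP : P.PosSemidef) {C : ℝ} (d m : n → ℝ)
    (hPQ : √((d - m) ⬝ᵥ (P *ᵥ (d - m))) ≤ C * √((d - m) ⬝ᵥ (Q *ᵥ (d - m)))) :
    |d ⬝ᵥ (P *ᵥ d) - (d - m) ⬝ᵥ (Q *ᵥ (d - m))| ≤
      √(m ⬝ᵥ (P *ᵥ m)) * (√(d ⬝ᵥ (P *ᵥ d)) + C * √((d - m) ⬝ᵥ (Q *ᵥ (d - m)))) +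
        |(d - m) ⬝ᵥ (P *ᵥ (d - m)) - (d - m) ⬝ᵥ (Q *ᵥ (d - m))| := by
  set e := d - m
  have hsplit : d ⬝ᵥ (P *ᵥ d) - e ⬝ᵥ (Q *ᵥ e) =
      m ⬝ᵥ (P *ᵥ d) + m ⬝ᵥ (P *ᵥ e) + (e ⬝ᵥ (P *ᵥ e) - e ⬝ᵥ (Q *ᵥ e)) := by
    rw [← dotProduct_mulVec_self_sub_dotProduct_mulVec_sub (isHermitian_iff_isSymm.mp hP.1)]
    ring
  have hd := hP.abs_dotProduct_mulVec_le m d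
  have he : |m ⬝ᵥ (P *ᵥ e)| ≤ √(m ⬝ᵥ (P *ᵥ m)) * (C * √(e ⬝ᵥ (Q *ᵥ e))) :=
    (hP.abs_dotProduct_mulVec_le m e).trans (mul_le_mul_of_nonneg_left hPQ (sqrt_nonneg _))
  rw [hsplit]
  calc _ ≤ |m ⬝ᵥ (P *ᵥ d)| + |m ⬝ᵥ (P *ᵥ e)| + |e ⬝ᵥ (P *ᵥ e) - e ⬝ᵥ (Q *ᵥ e)| :=
        abs_add_three _ _ _
    _ ≤ _ := by linarith

lemma abs_half_dotProduct_mulVec_sub_half_dotProduct_mulVec_sub_le {P Q : Matrix n n ℝ}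
    (hP : P.PosSemidef) (hQ : Q.PosSemidef) {C : ℝ} (d m : n → ℝ)
    (hPQ : √((d - m) ⬝ᵥ (P *ᵥ (d - m))) ≤ C * √((d - m) ⬝ᵥ (Q *ᵥ (d - m)))) :
    |1 / 2 * (d ⬝ᵥ (P *ᵥ d)) - 1 / 2 * ((d - m) ⬝ᵥ (Q *ᵥ (d - m)))| ≤
      (√2)⁻¹ * √(m ⬝ᵥ (P *ᵥ m)) *
        (√|1 / 2 * (d ⬝ᵥ (P *ᵥ d))| + C * √|1 / 2 * ((d - m) ⬝ᵥ (Q *ᵥ (d - m)))|) +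
      1 / 2 * |(d - m) ⬝ᵥ (P *ᵥ (d - m)) - (d - m) ⬝ᵥ (Q *ᵥ (d - m))| := by
  have h := abs_dotProduct_mulVec_sub_dotProduct_mulVec_sub_le hP d m hPQ
  have h2 : (√2)⁻¹ * (√2)⁻¹ = (1 / 2 : ℝ) := by
    rw [← mul_inv, mul_self_sqrt zero_le_two, one_div]
  rw [sqrt_abs_one_half_mul (hP.dotProduct_mulVec_self_nonneg d),
    sqrt_abs_one_half_mul (hQ.dotProduct_mulVec_self_nonneg (d - m)), ← mul_sub, abs_mul,
    abs_of_pos one_half_pos]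
  calc _ ≤ 1 / 2 * (√(m ⬝ᵥ (P *ᵥ m)) * (√(d ⬝ᵥ (P *ᵥ d)) +
          C * √((d - m) ⬝ᵥ (Q *ᵥ (d - m)))) +
          |(d - m) ⬝ᵥ (P *ᵥ (d - m)) - (d - m) ⬝ᵥ (Q *ᵥ (d - m))|) := by gcongr
    _ = _ := by rw [← h2]; ring

end Matrix

namespace MeasureTheory

variable {X : Type*} [MeasurableSpace X] {μ : Measure X} {f : X → ℝ}

lemma Integrable.sqrt_abs [IsFiniteMeasure μ] (hf : Integrable f μ) :
    Integrable (fun x => √|f x|) μ := by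
  have hm : AEStronglyMeasurable (fun x => √|f x|) μ :=
    continuous_sqrt.comp_aestronglyMeasurable hf.aestronglyMeasurable.norm
  refine ((memLp_two_iff_integrable_sq hm).2 ?_).integrable one_le_two
  simpa only [sq_sqrt (abs_nonneg _)] using hf.abs

lemma integral_sqrt_abs_le [IsProbabilityMeasure μ] (hf : Integrable f μ) :
    ∫ x, √|f x| ∂μ ≤ √(∫ x, |f x| ∂μ) :=
  strictConcaveOn_sqrt.concaveOn.le_map_integral continuous_sqrt.continuousOn isClosed_Ici
    (ae_of_all _ fun x => abs_nonneg (f x)) hf.abs hf.sqrt_abs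

lemma Integrable.dotProduct_mulVec_of_sqrt_le {n : Type*} [Fintype n] {P Q : Matrix n n ℝ}
    (hP : P.PosSemidef) (hQ : Q.PosSemidef) {C : ℝ}
    (hPQ : ∀ v, √(v ⬝ᵥ (P *ᵥ v)) ≤ C * √(v ⬝ᵥ (Q *ᵥ v))) {e : X → n → ℝ} (he : Measurable e)
    (hie : Integrable (fun x => e x ⬝ᵥ (Q *ᵥ e x)) μ) :
    Integrable (fun x => e x ⬝ᵥ (P *ᵥ e x)) μ := by
  refine (hie.const_mul (C ^ 2)).mono' (by fun_prop) (ae_of_all _ fun x => ?_)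
  have h := pow_le_pow_left₀ (sqrt_nonneg _) (hPQ (e x)) 2
  rwa [mul_pow, sq_sqrt (hP.dotProduct_mulVec_self_nonneg _),
    sq_sqrt (hQ.dotProduct_mulVec_self_nonneg _),
    ← abs_of_nonneg (hP.dotProduct_mulVec_self_nonneg (e x))] at h

lemma integral_abs_le_of_abs_le_sqrt_add [IsProbabilityMeasure μ] {F g h : X → ℝ} {c C a : ℝ}
    (hc : 0 ≤ c) (hC : 0 ≤ C) (hF : Integrable F μ) (hf : Integrable f μ) (hg : Integrable g μ)
    (hh : Integrable h μ) (hbound : ∀ x, |F x| ≤ c * (√|f x| + C * √|g x|) + a * |h x|) :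
    ∫ x, |F x| ∂μ ≤ c * (√(∫ x, |f x| ∂μ) + C * √(∫ x, |g x| ∂μ)) + a * ∫ x, |h x| ∂μ := by
  have hsqrt : Integrable (fun x => √|f x| + C * √|g x|) μ :=
    hf.sqrt_abs.add (hg.sqrt_abs.const_mul C)
  calc _ ≤ ∫ x, (c * (√|f x| + C * √|g x|) + a * |h x|) ∂μ :=
        integral_mono hF.abs ((hsqrt.const_mul c).add (hh.abs.const_mul a)) hbound
    _ = c * (∫ x, √|f x| ∂μ + C * ∫ x, √|g x| ∂μ) + a * ∫ x, |h x| ∂μ := by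
      rw [integral_add (hsqrt.const_mul c) (hh.abs.const_mul a), integral_const_mul,
        integral_const_mul, integral_add hf.sqrt_abs (hg.sqrt_abs.const_mul C),
        integral_const_mul]
    _ ≤ _ := by gcongr <;> exact integral_sqrt_abs_le ‹_›

end MeasureTheory

theorem stmt7_general {X U : Type*} [MeasurableSpace X] [NormedAddCommGroup U] [NormedSpace ℝ U]
    [MeasurableSpace U] [BorelSpace U]
    (μ : Measure X) [IsProbabilityMeasure μ] {n : ℕ}
    (Mappr : X → U) (hMappr : Measurable Mappr)
    (O : U →L[ℝ] (Fin n → ℝ)) (y : Fin n → ℝ) (mε : U)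
    (Γ : Matrix (Fin n) (Fin n) ℝ) (hΓ : Γ.PosDef)
    (S : Matrix (Fin n) (Fin n) ℝ) (hS : S.PosSemidef)
    (Ce : ℝ)
    (hCe : Ce = matOpNorm (hΓ.inv.posSemidef.sqrt * (hΓ.add_posSemidef hS).posSemidef.sqrt))
    (Φappr Φenh : X → ℝ)
    (hΦappr : Φappr = fun θ => (1/2) * ((y - O (Mappr θ)) ⬝ᵥ (Γ⁻¹ *ᵥ (y - O (Mappr θ)))))
    (hΦenh : Φenh = fun θ => (1/2) *
      ((y - O (Mappr θ) - O mε) ⬝ᵥ ((Γ + S)⁻¹ *ᵥ (y - O (Mappr θ) - O mε))))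
    (hia : Integrable Φappr μ) (hie : Integrable Φenh μ) :
    ∫ θ, |Φappr θ - Φenh θ| ∂μ ≤
      (Real.sqrt 2)⁻¹ * Real.sqrt ((O mε) ⬝ᵥ (Γ⁻¹ *ᵥ (O mε))) *
        (Real.sqrt (∫ θ, |Φappr θ| ∂μ) + Ce * Real.sqrt (∫ θ, |Φenh θ| ∂μ)) +
      (1/2) * ∫ θ,
        |((y - O (Mappr θ) - O mε) ⬝ᵥ (Γ⁻¹ *ᵥ (y - O (Mappr θ) - O mε))) -
          ((y - O (Mappr θ) - O mε) ⬝ᵥ ((Γ + S)⁻¹ *ᵥ (y - O (Mappr θ) - O mε)))| ∂μ := by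
  have hP := hΓ.inv.posSemidef
  have hQ := (hΓ.add_posSemidef hS).inv.posSemidef
  have hCe0 : 0 ≤ Ce := hCe ▸ norm_nonneg _
  have hPQ : ∀ v, √(v ⬝ᵥ (Γ⁻¹ *ᵥ v)) ≤ Ce * √(v ⬝ᵥ ((Γ + S)⁻¹ *ᵥ v)) :=
    hCe ▸ PosDef.sqrt_dotProduct_inv_mulVec_le hΓ (hΓ.add_posSemidef hS)
  set e : X → Fin n → ℝ := fun θ => y - O (Mappr θ) - O mε
  have hQe : Integrable (fun θ => e θ ⬝ᵥ ((Γ + S)⁻¹ *ᵥ e θ)) μ := by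
    refine (hie.const_mul 2).congr (ae_of_all _ fun θ => ?_)
    simp only [hΦenh]
    ring
  have hΔ : Integrable (fun θ => e θ ⬝ᵥ (Γ⁻¹ *ᵥ e θ) - e θ ⬝ᵥ ((Γ + S)⁻¹ *ᵥ e θ)) μ :=
    (hQe.dotProduct_mulVec_of_sqrt_le hP hQ hPQ (by fun_prop)).sub hQe
  refine integral_abs_le_of_abs_le_sqrt_add (by positivity) hCe0 (hia.sub hie) hia hie hΔ
    fun θ => ?_
  subst hΦappr hΦenh
  exact abs_half_dotProduct_mulVec_sub_half_dotProduct_mulVec_sub_le hP hQ _ _ (hPQ _)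

theorem stmt7 {X U : Type*} [MeasurableSpace X] [NormedAddCommGroup U] [NormedSpace ℝ U]
    [CompleteSpace U] [MeasurableSpace U] [BorelSpace U]
    (μ : Measure X) [IsProbabilityMeasure μ] {n : ℕ}
    (Mappr : X → U) (hMappr : Measurable Mappr)
    (O : U →L[ℝ] (Fin n → ℝ)) (y : Fin n → ℝ) (mε : U)
    (Γ : Matrix (Fin n) (Fin n) ℝ) (hΓ : Γ.PosDef)
    (S : Matrix (Fin n) (Fin n) ℝ) (hS : S.PosSemidef)
    (Ce : ℝ)
    (hCe : Ce = matOpNorm (hΓ.inv.posSemidef.sqrt * (hΓ.add_posSemidef hS).posSemidef.sqrt))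
    (Φappr Φenh : X → ℝ)
    (hΦappr : Φappr = fun θ => (1/2) * ((y - O (Mappr θ)) ⬝ᵥ (Γ⁻¹ *ᵥ (y - O (Mappr θ)))))
    (hΦenh : Φenh = fun θ => (1/2) *
      ((y - O (Mappr θ) - O mε) ⬝ᵥ ((Γ + S)⁻¹ *ᵥ (y - O (Mappr θ) - O mε))))
    (hia : Integrable Φappr μ) (hie : Integrable Φenh μ) :
    ∫ θ, |Φappr θ - Φenh θ| ∂μ ≤
      (Real.sqrt 2)⁻¹ * Real.sqrt ((O mε) ⬝ᵥ (Γ⁻¹ *ᵥ (O mε))) *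
        (Real.sqrt (∫ θ, |Φappr θ| ∂μ) + Ce * Real.sqrt (∫ θ, |Φenh θ| ∂μ)) +
      (1/2) * ∫ θ,
        |((y - O (Mappr θ) - O mε) ⬝ᵥ (Γ⁻¹ *ᵥ (y - O (Mappr θ) - O mε))) -
          ((y - O (Mappr θ) - O mε) ⬝ᵥ ((Γ + S)⁻¹ *ᵥ (y - O (Mappr θ) - O mε)))| ∂μ :=
  stmt7_general μ Mappr hMappr O y mε Γ hΓ S hS Ce hCe Φappr Φenh hΦappr hΦenh hia hie
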